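/- Let A be a C*-algebra and D ⊆ A an abelian closed *-subalgebra containing an approximate unit for A, and let n be a normaliser of D in A. Then n* is a normaliser of D in A and α_{n*} : supp°(nn*) → supp°(n*n) equals the inverse of the homeomorphism α_n. -/

import Mathlib

open WeakDual Filter Topology Classical

variable {A : Type} [NonUnitalNormedRing A] [StarRing A] [CStarRing A]
  [NormedSpace ℂ A] [IsScalarTower ℂ A A] [SMulCommClass ℂ A A] [CompleteSpace A] [StarModule ℂ A]

/-- Evaluation of a character of `D` at an element of `A` (taken to be `0` off `D`). -/
noncomputable def evalD (D : NonUnitalStarSubalgebra ℂ A) (φ : characterSpace ℂ D) (a : A) : ℂ :=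
  if h : a ∈ D then φ (⟨a, h⟩ : D) else 0

/-- The open support `supp°(a) = {φ ∈ D̂ : φ(a) ≠ 0}`. -/
def suppo (D : NonUnitalStarSubalgebra ℂ A) (a : A) : Set (characterSpace ℂ D) :=
  {φ | evalD D φ a ≠ 0}

/-- `n` is a normaliser of `D` in `A`. -/
def IsNormalizer (D : NonUnitalStarSubalgebra ℂ A) (n : A) : Prop :=
  ∀ d ∈ D, n * d * star n ∈ D ∧ star n * d * n ∈ D

/-- `S` contains an approximate unit for `A`: there is a net in `S` converging
multiplicatively to the identity on every element of `A`. -/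
def HasApproxUnit (S : Set A) : Prop :=
  ∃ (ι : Type) (l : Filter ι) (e : ι → A), l.NeBot ∧ (∀ i, e i ∈ S) ∧
    ∀ a : A, Tendsto (fun i => e i * a) l (nhds a) ∧ Tendsto (fun i => a * e i) l (nhds a)

/-- `α` is "the" homeomorphism `α_n : supp°(n*n) → supp°(nn*)` attached to a normaliser `n`,
i.e. a partial homeomorphism of `D̂` with source `supp°(n*n)`, target `supp°(nn*)`, and
satisfying `φ(n*n)·(α_n φ)(d) = φ(n* d n)` for all `φ` in the source and `d ∈ D`. -/
def IsWeylHomeo (D : NonUnitalStarSubalgebra ℂ A) (n : A)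
    (α : PartialHomeomorph (characterSpace ℂ D) (characterSpace ℂ D)) : Prop :=
  α.source = suppo D (star n * n) ∧ α.target = suppo D (n * star n) ∧
  ∀ φ ∈ α.source, ∀ d ∈ D, evalD D φ (star n * n) * evalD D (α φ) d = evalD D φ (star n * d * n)

/-- The relative commutant `D' = {a ∈ A : a d = d a for all d ∈ D}`, as a set. -/
def commutantSet (D : NonUnitalStarSubalgebra ℂ A) : Set A := {a | ∀ d ∈ D, a * d = d * a}

/-- The ideal `J_φ ⊆ D'`: the closure of `(ker φ)·D'`. -/
noncomputable def Jset (D : NonUnitalStarSubalgebra ℂ A) (φ : characterSpace ℂ D) : Set A :=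
  closure ((Submodule.span ℂ {x : A | ∃ k ∈ (D : Set A), ∃ a ∈ commutantSet D,
    evalD D φ k = 0 ∧ x = k * a} : Submodule ℂ A) : Set A)

/-- `e ∈ D'` represents the unit of `D'/J_φ`. -/
def IsUnitModJ (D : NonUnitalStarSubalgebra ℂ A) (φ : characterSpace ℂ D) (e : A) : Prop :=
  e ∈ commutantSet D ∧ ∀ a ∈ commutantSet D, e * a - a ∈ Jset D φ ∧ a * e - a ∈ Jset D φ

/-- `D` is a weakly Cartan subalgebra of `A`. -/
def IsWeaklyCartan (D : NonUnitalStarSubalgebra ℂ A) : Prop :=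
  IsClosed (D : Set A) ∧ (∀ x ∈ D, ∀ y ∈ D, x * y = y * x) ∧ HasApproxUnit (D : Set A) ∧
  (∀ φ : characterSpace ℂ D, ∃ e, IsUnitModJ D φ e) ∧
  (∀ φ : characterSpace ℂ D, ∃ d ∈ D, ∃ U : Set (characterSpace ℂ D),
    IsOpen U ∧ φ ∈ U ∧ ∀ ψ ∈ U, IsUnitModJ D ψ d)

/-- The relative commutant `D'` as a non-unital star subalgebra of `A`. -/
def commutantAlg (D : NonUnitalStarSubalgebra ℂ A) : NonUnitalStarSubalgebra ℂ A where
  carrier := commutantSet D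
  add_mem' := by
    intro a b ha hb d hd
    simp only [commutantSet, Set.mem_setOf_eq] at *
    rw [add_mul, mul_add, ha d hd, hb d hd]
  zero_mem' := by
    intro d _
    rw [zero_mul, mul_zero]
  mul_mem' := by
    intro a b ha hb d hd
    calc a * b * d = a * (b * d) := by rw [mul_assoc]
      _ = a * (d * b) := by rw [hb d hd]
      _ = a * d * b := by rw [mul_assoc]
      _ = d * a * b := by rw [ha d hd]
      _ = d * (a * b) := by rw [mul_assoc]
  smul_mem' := by
    intro c a ha d hd
    rw [smul_mul_assoc, ha d hd, mul_smul_comm]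
  star_mem' := by
    intro a ha d hd
    calc star a * d = star (star d * a) := by rw [star_mul, star_star]
      _ = star (a * star d) := by rw [← ha (star d) (star_mem hd)]
      _ = d * star a := by rw [star_mul, star_star]

/-- `w` is a representative in `A` of the unitary `U^φ_{n*m}` of `D'/J_φ`:
`w = φ(m*m)^{-1/2}·φ(n*n)^{-1/2}·(d n* m d)` for some admissible `U` and `d`. -/
noncomputable def WeylRep (D : NonUnitalStarSubalgebra ℂ A) (n m : A)
    (φ : characterSpace ℂ D) (w : A) : Prop :=
  ∃ U : Set (characterSpace ℂ D), IsOpen U ∧ φ ∈ U ∧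
    U ⊆ suppo D (star n * n) ∩ suppo D (star m * m) ∧
    (∃ αn αm : PartialHomeomorph (characterSpace ℂ D) (characterSpace ℂ D),
       IsWeylHomeo D n αn ∧ IsWeylHomeo D m αm ∧ Set.EqOn ⇑αn ⇑αm U) ∧
    ∃ d ∈ (D : Set A), suppo D d ⊆ U ∧ evalD D φ d = 1 ∧
      w = (evalD D φ (star m * m) ^ (-(1/2) : ℂ) * evalD D φ (star n * n) ^ (-(1/2) : ℂ)) •
        (d * (star n * m) * d)

/-- The unitary `U^φ_{n*m}` of `D'/J_φ` lies in the connected component of the identity of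
the unitary group of `D'/J_φ`; the quotient `D'/J_φ` is represented by an arbitrary
surjective star-homomorphism `π` from `D'` onto a unital C*-algebra `Q` with kernel `J_φ`. -/
noncomputable def InU0 (D : NonUnitalStarSubalgebra ℂ A) (n m : A)
    (φ : characterSpace ℂ D) : Prop :=
  ∀ (Q : Type) [NormedRing Q] [StarRing Q] [CStarRing Q] [NormedAlgebra ℂ Q]
    [CompleteSpace Q] [StarModule ℂ Q] (π : commutantAlg D →⋆ₙₐ[ℂ] Q),
    Function.Surjective ⇑π →
    (∀ a : commutantAlg D, π a = 0 ↔ (a : A) ∈ Jset D φ) →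
    ∃ w : commutantAlg D, WeylRep D n m φ (w : A) ∧
      ∃ hu : π w ∈ unitary Q, (⟨π w, hu⟩ : unitary Q) ∈ connectedComponent (1 : unitary Q)

/-- The relation `(n, φ) ∼ (m, ψ)` of Lemma 4.7 (for the trivial coaction). -/
noncomputable def WeylSimRaw (D : NonUnitalStarSubalgebra ℂ A) (n : A)
    (φ : characterSpace ℂ D) (m : A) (ψ : characterSpace ℂ D) : Prop :=
  φ = ψ ∧
  (∃ U : Set (characterSpace ℂ D), IsOpen U ∧ φ ∈ U ∧
    U ⊆ suppo D (star n * n) ∩ suppo D (star m * m) ∧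
    ∃ αn αm : PartialHomeomorph (characterSpace ℂ D) (characterSpace ℂ D),
      IsWeylHomeo D n αn ∧ IsWeylHomeo D m αm ∧ Set.EqOn ⇑αn ⇑αm U) ∧
  InU0 D n m φ

/-- The set of pairs `(n, φ)` with `n ∈ N(D)` and `φ ∈ supp°(n*n)`. -/
def WeylPair (D : NonUnitalStarSubalgebra ℂ A) : Type :=
  {p : A × characterSpace ℂ D // IsNormalizer D p.1 ∧ p.2 ∈ suppo D (star p.1 * p.1)}

/-! For `φ ∈ supp°(nn*)` put `ψ = α_n⁻¹ φ`. The defining identity of `α_n` at `ψ`, applied to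
`n d n*` and to `nn*`, gives `φ(n d n*) = ψ(d) φ(nn*)`; this is the defining identity of `α_{n*}`
at `φ` with `ψ` in place of `α_{n*} φ`, and characters are determined by their values on `D`. -/

section

omit [CStarRing A] [IsScalarTower ℂ A A] [SMulCommClass ℂ A A] [CompleteSpace A] [StarModule ℂ A]

variable {D : NonUnitalStarSubalgebra ℂ A}

theorem evalD_of_mem {a : A} (ha : a ∈ D) (φ : characterSpace ℂ D) :
    evalD D φ a = φ ⟨a, ha⟩ :=
  dif_pos ha

theorem mem_of_evalD_ne_zero {φ : characterSpace ℂ D} {a : A} (h : evalD D φ a ≠ 0) : a ∈ D := by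
  by_contra ha
  exact h (dif_neg ha)

theorem evalD_mul (φ : characterSpace ℂ D) {x y : A} (hx : x ∈ D) (hy : y ∈ D) :
    evalD D φ (x * y) = evalD D φ x * evalD D φ y := by
  rw [evalD_of_mem hx, evalD_of_mem hy, evalD_of_mem (mul_mem hx hy)]
  exact map_mul φ ⟨x, hx⟩ ⟨y, hy⟩

theorem characterSpace_ext_evalD {φ ψ : characterSpace ℂ D}
    (h : ∀ d ∈ D, evalD D φ d = evalD D ψ d) : φ = ψ :=
  Subtype.ext <| ContinuousLinearMap.ext fun x => by
    have hx := h x x.2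
    rw [evalD_of_mem x.2, evalD_of_mem x.2] at hx
    exact hx

theorem IsNormalizer.star {n : A} (hn : IsNormalizer D n) : IsNormalizer D (star n) :=
  fun d hd => by simpa only [star_star] using (hn d hd).symm

theorem IsWeylHomeo.evalD_apply_of_conj_eq {n : A}
    {α : PartialHomeomorph (characterSpace ℂ D) (characterSpace ℂ D)} (hα : IsWeylHomeo D n α)
    {φ : characterSpace ℂ D} (hφ : φ ∈ α.source) {x z : A} (hx : x ∈ D) (hz : z ∈ D)
    (hxz : star n * x * n = star n * n * z) :
    evalD D (α φ) x = evalD D φ z := by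
  have hφn : evalD D φ (star n * n) ≠ 0 := by
    rw [hα.1] at hφ
    exact hφ
  apply mul_left_cancel₀ hφn
  rw [hα.2.2 φ hφ x hx, hxz, evalD_mul φ (mem_of_evalD_ne_zero hφn) hz]

theorem IsWeylHomeo.evalD_conj_eq_evalD_symm {n : A} (hn : IsNormalizer D n)
    {α : PartialHomeomorph (characterSpace ℂ D) (characterSpace ℂ D)} (hα : IsWeylHomeo D n α)
    {φ : characterSpace ℂ D} (hφ : φ ∈ α.target) {d : A} (hd : d ∈ D) :
    evalD D φ (n * d * star n) = evalD D (α.symm φ) d * evalD D φ (n * star n) := by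
  set ψ := α.symm φ
  have hψ : ψ ∈ α.source := α.map_target hφ
  have hnn : star n * n ∈ D := mem_of_evalD_ne_zero (show ψ ∈ suppo D (star n * n) from hα.1 ▸ hψ)
  have hnn' : n * star n ∈ D := mem_of_evalD_ne_zero (show φ ∈ suppo D (n * star n) from hα.2.1 ▸ hφ)
  rw [← α.right_inv hφ, hα.evalD_apply_of_conj_eq hψ (hn d hd).1 (mul_mem hd hnn)
      (by simp only [mul_assoc]), evalD_mul ψ hd hnn,
    hα.evalD_apply_of_conj_eq hψ hnn' hnn (by simp only [mul_assoc])]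

end

theorem statement_4_general
    (D : NonUnitalStarSubalgebra ℂ A)
    (n : A) (hn : IsNormalizer D n)
    (αn : PartialHomeomorph (characterSpace ℂ D) (characterSpace ℂ D))
    (hαn : IsWeylHomeo D n αn) :
    IsNormalizer D (star n) ∧
    ∀ αs : PartialHomeomorph (characterSpace ℂ D) (characterSpace ℂ D),
      IsWeylHomeo D (star n) αs → Set.EqOn ⇑αs ⇑αn.symm αs.source := by
  refine ⟨hn.star, fun αs hαs φ hφ => characterSpace_ext_evalD fun d hd => ?_⟩
  have hφn : evalD D φ (n * star n) ≠ 0 := by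
    rw [hαs.1, suppo, star_star] at hφ
    exact hφ
  have hφt : φ ∈ αn.target := by
    rw [hαn.2.1]
    exact hφn
  have hαsφ := hαs.2.2 φ hφ d hd
  rw [star_star] at hαsφ
  apply mul_left_cancel₀ hφn
  rw [hαsφ, hαn.evalD_conj_eq_evalD_symm hn hφt hd, mul_comm]

theorem statement_4
    (D : NonUnitalStarSubalgebra ℂ A) (hDclosed : IsClosed (D : Set A))
    (hDabelian : ∀ x ∈ D, ∀ y ∈ D, x * y = y * x)
    (hDapprox : HasApproxUnit (D : Set A))
    (n : A) (hn : IsNormalizer D n)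
    (αn : PartialHomeomorph (characterSpace ℂ D) (characterSpace ℂ D))
    (hαn : IsWeylHomeo D n αn) :
    IsNormalizer D (star n) ∧
    ∀ αs : PartialHomeomorph (characterSpace ℂ D) (characterSpace ℂ D),
      IsWeylHomeo D (star n) αs → Set.EqOn ⇑αs ⇑αn.symm αs.source :=
  statement_4_general D n hn αn hαn
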